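/- arXiv:2510.13773 — 5 statements merged into one kernel-verified Lean document; each statement's English description precedes it below -/
import Mathlib

section
/- Let a, b, c be coprime integers with a^13 + b^13 = 3 c^7 and abc ≠ 0. Then 3 does not divide (a^13 + b^13)/(a + b). -/
theorem stmt2 (a b c : ℤ) (hgcd : Int.gcd a (Int.gcd b c) = 1)
    (heq : a ^ 13 + b ^ 13 = 3 * c ^ 7) (hne : a * b * c ≠ 0) :
    ¬ (3 ∣ (a ^ 13 + b ^ 13) / (a + b)) := by
  have ha : a ≠ 0 := fun h => hne (by simp [h])
  have hb : b ≠ 0 := fun h => hne (by simp [h])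
  have hc : c ≠ 0 := fun h => hne (by simp [h])
  -- a + b ≠ 0
  have hab : a + b ≠ 0 := by
    intro h
    have hba : b = -a := by linarith
    have : (3 : ℤ) * c ^ 7 = 0 := by rw [← heq, hba]; ring
    have : c ^ 7 = 0 := by linarith [this]
    exact hc (pow_eq_zero_iff (by norm_num) |>.mp this)
  -- in ZMod 3, a + b = 0
  have hx13 : ∀ x : ZMod 3, x ^ 13 = x := by decide
  have hsum0 : (a : ZMod 3) + (b : ZMod 3) = 0 := by
    have h0 : ((a ^ 13 + b ^ 13 : ℤ) : ZMod 3) = 0 := by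
      rw [heq]; push_cast; rw [show (3:ZMod 3) = 0 from by decide]; ring
    push_cast at h0
    rwa [hx13, hx13] at h0
  -- 3 ∤ a
  have h3a : ¬ (3 : ℤ) ∣ a := by
    intro h3a
    have h3b : (3 : ℤ) ∣ b := by
      have : ((b : ZMod 3)) = 0 := by
        have : (a : ZMod 3) = 0 := (ZMod.intCast_zmod_eq_zero_iff_dvd a 3).mpr h3a
        rw [this] at hsum0; simpa using hsum0
      exact (ZMod.intCast_zmod_eq_zero_iff_dvd b 3).mp this
    have h3c : (3 : ℤ) ∣ c := by
      have h9 : (9 : ℤ) ∣ 3 * c ^ 7 := by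
        rw [← heq]
        obtain ⟨a', rfl⟩ := h3a
        obtain ⟨b', rfl⟩ := h3b
        exact ⟨3^11 * a'^13 + 3^11 * b'^13, by ring⟩
      have h3c7 : (3 : ℤ) ∣ c ^ 7 := by
        obtain ⟨k, hk⟩ := h9
        exact ⟨k, by linarith⟩
      exact Int.Prime.dvd_pow' (by norm_num) h3c7
    have : (3 : ℤ) ∣ (Int.gcd a (Int.gcd b c) : ℤ) :=
      Int.dvd_coe_gcd h3a (Int.dvd_coe_gcd h3b h3c)
    rw [hgcd] at this
    norm_num at this
  -- the cofactor
  set S : ℤ := a^12 - a^11*b + a^10*b^2 - a^9*b^3 + a^8*b^4 - a^7*b^5 + a^6*b^6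
      - a^5*b^7 + a^4*b^8 - a^3*b^9 + a^2*b^10 - a*b^11 + b^12 with hS
  have hfac : a ^ 13 + b ^ 13 = (a + b) * S := by rw [hS]; ring
  have hdiv : (a ^ 13 + b ^ 13) / (a + b) = S := by
    rw [hfac, Int.mul_ediv_cancel_left _ hab]
  rw [hdiv]
  intro hdS
  have hScast : ((S : ℤ) : ZMod 3) = 0 := (ZMod.intCast_zmod_eq_zero_iff_dvd S 3).mpr hdS
  have hba : (b : ZMod 3) = -(a : ZMod 3) := by linear_combination hsum0
  have haz : (a : ZMod 3) ≠ 0 := fun h =>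
    h3a ((ZMod.intCast_zmod_eq_zero_iff_dvd a 3).mp h)
  have h12 : ∀ x : ZMod 3, x ≠ 0 → 13 * x ^ 12 = 1 := by decide
  have : ((S : ℤ) : ZMod 3) = 13 * (a : ZMod 3) ^ 12 := by
    rw [hS]; push_cast; rw [hba]; ring
  rw [this, h12 _ haz] at hScast
  exact one_ne_zero hScast
end

section
/- Let a, b, c be integers with gcd(a, b, c) = 1 satisfying a^13 + b^13 = 3 c^7. Then 2 divides a + b if and only if 4 divides a + b. -/
lemma key4 : ∀ x y z : ZMod 4, x ^ 13 + y ^ 13 = 3 * z ^ 7 → x + y = 2 →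
    ((x = 0 ∨ x = 2) ∧ (z = 0 ∨ z = 2)) := by decide

lemma even_of_zmod4 (a : ℤ) (h : (a : ZMod 4) = 0 ∨ (a : ZMod 4) = 2) : (2:ℤ) ∣ a := by
  suffices h2 : (a : ZMod 2) = 0 by
    exact_mod_cast (ZMod.intCast_zmod_eq_zero_iff_dvd a 2).mp h2
  have hfa : (ZMod.castHom (by norm_num : (2:ℕ) ∣ 4) (ZMod 2)) ((a : ZMod 4)) = (a : ZMod 2) :=
    map_intCast _ a
  rcases h with h | h <;> rw [h] at hfa <;> rw [← hfa] <;> decide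

theorem stmt3 (a b c : ℤ) (hgcd : Int.gcd a (Int.gcd b c) = 1)
    (heq : a ^ 13 + b ^ 13 = 3 * c ^ 7) :
    2 ∣ a + b ↔ 4 ∣ a + b := by
  constructor
  · intro h2
    by_contra h4
    obtain ⟨k, hk⟩ := h2
    have hk2 : ¬ (2:ℤ) ∣ k := fun ⟨m, hm⟩ => h4 ⟨m, by omega⟩
    obtain ⟨m, hm⟩ : ∃ m, k = 2 * m + 1 := ⟨k / 2, by omega⟩
    have hab : ((a : ZMod 4) + (b : ZMod 4)) = 2 := by
      have : ((a + b : ℤ) : ZMod 4) = ((4 * m + 2 : ℤ) : ZMod 4) := by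
        rw [hk, hm]; ring_nf
      push_cast at this
      rw [show ((4:ZMod 4)) = 0 by decide] at this
      simpa using this
    have heq4 : (a : ZMod 4) ^ 13 + (b : ZMod 4) ^ 13 = 3 * (c : ZMod 4) ^ 7 := by
      have := congrArg (fun n : ℤ => (n : ZMod 4)) heq
      push_cast at this
      exact this
    obtain ⟨hx, hz⟩ := key4 _ _ _ heq4 hab
    have ha : (2:ℤ) ∣ a := even_of_zmod4 a hx
    have hc : (2:ℤ) ∣ c := even_of_zmod4 c hz
    have hb : (2:ℤ) ∣ b := by
      obtain ⟨s, hs⟩ := ha; exact ⟨2 * m + 1 - s, by omega⟩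
    have : (2:ℤ) ∣ (Int.gcd a (Int.gcd b c) : ℤ) :=
      Int.dvd_coe_gcd ha (Int.dvd_coe_gcd hb hc)
    rw [hgcd] at this
    norm_num at this
  · intro h4
    obtain ⟨k, hk⟩ := h4
    exact ⟨2 * k, by omega⟩
end

section
/- Let a, b, c be coprime nonzero integers with a^13 + b^13 = 3 c^7 and suppose 13 does not divide a + b. Then there exist coprime integers c1, c2 with a + b = 3 c1^7 and (a^13 + b^13)/(a + b) = c2^7. -/
theorem stmt4 (a b c : ℤ) (hgcd : Int.gcd a (Int.gcd b c) = 1)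
    (hne : a * b * c ≠ 0)
    (heq : a ^ 13 + b ^ 13 = 3 * c ^ 7)
    (h13 : ¬ (13 : ℤ) ∣ a + b) :
    ∃ c1 c2 : ℤ, IsCoprime c1 c2 ∧ a + b = 3 * c1 ^ 7 ∧
      (a ^ 13 + b ^ 13) / (a + b) = c2 ^ 7 := by
  have hc : c ≠ 0 := fun h => hne (by simp [h])
  set t : ℤ := a^12 - a^11*b + a^10*b^2 - a^9*b^3 + a^8*b^4 - a^7*b^5 + a^6*b^6
      - a^5*b^7 + a^4*b^8 - a^3*b^9 + a^2*b^10 - a*b^11 + b^12 with ht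
  have key : (a + b) * t = a ^ 13 + b ^ 13 := by rw [ht]; ring
  have hsne : a + b ≠ 0 := by
    intro h
    have h0 : 3 * c ^ 7 = 0 := by rw [← heq, ← key, h, zero_mul]
    have h7 : c ^ 7 = 0 := by linarith
    exact hc (pow_eq_zero_iff (by norm_num) |>.mp h7)
  -- 3 ∣ a + b
  have h3 : (3 : ℤ) ∣ a + b := by
    have hz : ((a + b : ℤ) : ZMod 3) = 0 := by
      have h1 : ∀ x : ZMod 3, x ^ 13 = x := by decide
      have h2 : ((a ^ 13 + b ^ 13 : ℤ) : ZMod 3) = ((3 * c ^ 7 : ℤ) : ZMod 3) := by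
        rw [heq]
      push_cast at h2 ⊢
      rw [h1, h1] at h2
      rw [h2, show ((3:ZMod 3)) = 0 by decide, zero_mul]
    exact (ZMod.intCast_zmod_eq_zero_iff_dvd _ 3).mp hz
  -- coprimality of a+b and t
  have hcop : IsCoprime (a + b) t := by
    rw [Int.isCoprime_iff_gcd_eq_one]
    by_contra hg
    obtain ⟨p, hp, hpd⟩ := Nat.exists_prime_and_dvd hg
    have hip : Prime (p : ℤ) := Int.prime_iff_natAbs_prime.mpr (by simpa using hp)
    have hps : (p : ℤ) ∣ a + b :=
      dvd_trans (Int.natCast_dvd_natCast.mpr hpd) (Int.gcd_dvd_left _ _)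
    have hpt : (p : ℤ) ∣ t :=
      dvd_trans (Int.natCast_dvd_natCast.mpr hpd) (Int.gcd_dvd_right _ _)
    -- t ≡ 13 a^12 mod (a+b)
    have h13a : (p : ℤ) ∣ 13 * a ^ 12 := by
      have hq : 13 * a ^ 12 = t - (a + b) *
          (b^11 - 2*a*b^10 + 3*a^2*b^9 - 4*a^3*b^8 + 5*a^4*b^7 - 6*a^5*b^6
            + 7*a^6*b^5 - 8*a^7*b^4 + 9*a^8*b^3 - 10*a^9*b^2 + 11*a^10*b - 12*a^11) := by
        rw [ht]; ring
      rw [hq]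
      exact dvd_sub hpt (hps.mul_right _)
    rcases hip.dvd_mul.mp h13a with h13' | hpa
    · -- p = 13, contradicting h13
      have hp13 : p = 13 := by
        have : p ∣ 13 := by exact_mod_cast h13'
        exact (Nat.prime_dvd_prime_iff_eq hp (by norm_num)).mp this
      exact h13 (by rw [hp13] at hps; exact_mod_cast hps)
    · have hpa' : (p : ℤ) ∣ a := hip.dvd_of_dvd_pow hpa
      have hpb : (p : ℤ) ∣ b := by
        have := dvd_sub hps hpa'
        simpa using this
      -- p ∣ 3 c^7
      have hp3c : (p : ℤ) ∣ 3 * c ^ 7 := by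
        rw [← heq]
        exact dvd_add (dvd_pow hpa' (by norm_num)) (dvd_pow hpb (by norm_num))
      have hpc : (p : ℤ) ∣ c := by
        rcases hip.dvd_mul.mp hp3c with hd3 | hd
        · -- p = 3, then 3 ∣ a, 3 ∣ b forces 3 ∣ c
          have hp3 : (p : ℤ) = 3 := by
            have : p ∣ 3 := by exact_mod_cast hd3
            exact_mod_cast (Nat.prime_dvd_prime_iff_eq hp (by norm_num)).mp this
          rw [hp3] at hpa' hpb ⊢
          obtain ⟨x, hx⟩ := hpa'
          obtain ⟨y, hy⟩ := hpb
          have h9 : (9 : ℤ) ∣ 3 * c ^ 7 := by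
            rw [← heq, hx, hy]
            exact ⟨3 ^ 11 * x ^ 13 + 3 ^ 11 * y ^ 13, by ring⟩
          obtain ⟨z, hz⟩ := h9
          have h3c7 : c ^ 7 = 3 * z := by linarith
          exact (Int.Prime.dvd_pow' (by norm_num) ⟨z, h3c7⟩ : (3:ℤ) ∣ c)
        · exact hip.dvd_of_dvd_pow hd
      have hdvd1 : (p : ℤ) ∣ ((Int.gcd a (Int.gcd b c) : ℕ) : ℤ) :=
        Int.dvd_coe_gcd hpa' (Int.dvd_coe_gcd hpb hpc)
      rw [hgcd] at hdvd1
      have : p ∣ 1 := by exact_mod_cast hdvd1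
      exact hp.one_lt.ne' (Nat.dvd_one.mp this)
  -- factor out 3
  obtain ⟨s1, hs1⟩ := h3
  have hmul : s1 * t = c ^ 7 := by
    have h3t : 3 * (s1 * t) = 3 * c ^ 7 := by rw [← heq, ← key, hs1]; ring
    exact mul_left_cancel₀ (by norm_num) h3t
  have hcop1 : IsCoprime s1 t :=
    hcop.of_isCoprime_of_dvd_left ⟨3, by rw [hs1]; ring⟩
  have hu : IsUnit (gcd s1 t) := by
    rw [← Int.coe_gcd, Int.isCoprime_iff_gcd_eq_one.mp hcop1]
    exact isUnit_one
  obtain ⟨d1, hd1⟩ := exists_associated_pow_of_mul_eq_pow hu hmul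
  have hmul' : t * s1 = c ^ 7 := by rw [mul_comm]; exact hmul
  have hu' : IsUnit (gcd t s1) := by rwa [gcd_comm]
  obtain ⟨d2, hd2⟩ := exists_associated_pow_of_mul_eq_pow hu' hmul'
  -- turn associates into exact seventh powers
  have hs1pow : ∃ c1 : ℤ, s1 = c1 ^ 7 := by
    rcases Int.associated_iff.mp hd1 with h | h
    · exact ⟨d1, h.symm⟩
    · exact ⟨-d1, by rw [Odd.neg_pow (by decide : Odd 7), h, neg_neg]⟩
  have htpow : ∃ c2 : ℤ, t = c2 ^ 7 := by
    rcases Int.associated_iff.mp hd2 with h | h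
    · exact ⟨d2, h.symm⟩
    · exact ⟨-d2, by rw [Odd.neg_pow (by decide : Odd 7), h, neg_neg]⟩
  obtain ⟨c1, hc1⟩ := hs1pow
  obtain ⟨c2, hc2⟩ := htpow
  refine ⟨c1, c2, ?_, ?_, ?_⟩
  · have : IsCoprime (c1 ^ 7) (c2 ^ 7) := by rwa [← hc1, ← hc2]
    exact (IsCoprime.of_isCoprime_of_dvd_left
      (this.of_isCoprime_of_dvd_right (dvd_pow_self c2 (by norm_num)))
      (dvd_pow_self c1 (by norm_num)))
  · rw [hs1, hc1]
  · rw [← key, Int.mul_ediv_cancel_left _ hsne, hc2]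
end

section
/- Let ζ be a primitive 13th root of unity and let a, b be coprime integers with a^13 + b^13 = 3c^7 for some integer c. Then the ideal generated by 3 and a + ζb in ℤ[ζ] is the unit ideal. -/
open NumberField

theorem stmt6 (ζ : 𝓞 (CyclotomicField 13 ℚ)) (hζ : IsPrimitiveRoot ζ 13)
    (a b c : ℤ) (hab : IsCoprime a b)
    (heq : a ^ 13 + b ^ 13 = 3 * c ^ 7) :
    Ideal.span ({3, (a : 𝓞 (CyclotomicField 13 ℚ)) + ζ * (b : 𝓞 (CyclotomicField 13 ℚ))} :
      Set (𝓞 (CyclotomicField 13 ℚ))) = ⊤ := by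
  by_contra h
  obtain ⟨P, hPmax, hle⟩ := Ideal.exists_le_maximal _ h
  have hPprime : P.IsPrime := hPmax.isPrime
  have hP3 : (3 : 𝓞 (CyclotomicField 13 ℚ)) ∈ P := hle (Ideal.subset_span (by simp))
  have hPx : (a : 𝓞 (CyclotomicField 13 ℚ)) + ζ * b ∈ P := hle (Ideal.subset_span (by simp))
  -- 3 divides a + b
  have h3ab : (3 : ℤ) ∣ a + b := by
    have h13 : ∀ x : ZMod 3, x ^ 13 = x := by decide
    have hz : ((a + b : ℤ) : ZMod 3) = 0 := by
      have := congrArg (fun z : ℤ => (z : ZMod 3)) heq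
      push_cast at this
      rw [h13, h13] at this
      push_cast
      rw [this]
      ring_nf
      simp [show ((3 : ZMod 3)) = 0 from rfl]
    exact (ZMod.intCast_zmod_eq_zero_iff_dvd _ _).mp hz
  obtain ⟨k, hk⟩ := h3ab
  have hPab : ((a : 𝓞 (CyclotomicField 13 ℚ)) + b) ∈ P := by
    have : ((a : 𝓞 (CyclotomicField 13 ℚ)) + b) = 3 * (k : 𝓞 (CyclotomicField 13 ℚ)) := by
      have := congrArg (fun z : ℤ => (z : 𝓞 (CyclotomicField 13 ℚ))) hk
      push_cast at this
      exact this
    rw [this]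
    exact Ideal.mul_mem_right _ _ hP3
  have hPb1ζ : (b : 𝓞 (CyclotomicField 13 ℚ)) * (1 - ζ) ∈ P := by
    have heq2 : (b : 𝓞 (CyclotomicField 13 ℚ)) * (1 - ζ) = ((a : 𝓞 (CyclotomicField 13 ℚ)) + b) - ((a : 𝓞 (CyclotomicField 13 ℚ)) + ζ * b) := by ring
    rw [heq2]
    exact P.sub_mem hPab hPx
  have hne : (1 : 𝓞 (CyclotomicField 13 ℚ)) ∉ P := fun h1 => hPmax.ne_top (P.eq_top_of_isUnit_mem h1 isUnit_one)
  rcases hPprime.mem_or_mem hPb1ζ with hb | hζP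
  · -- b ∈ P, then a ∈ P, contradiction with coprimality
    have ha : (a : 𝓞 (CyclotomicField 13 ℚ)) ∈ P := by
      have : (a : 𝓞 (CyclotomicField 13 ℚ)) = ((a : 𝓞 (CyclotomicField 13 ℚ)) + ζ * b) - ζ * b := by ring
      rw [this]
      exact P.sub_mem hPx (Ideal.mul_mem_left _ _ hb)
    obtain ⟨u, v, huv⟩ := hab
    have : (1 : 𝓞 (CyclotomicField 13 ℚ)) ∈ P := by
      have hcast : (u : 𝓞 (CyclotomicField 13 ℚ)) * a + v * b = 1 := by
        have := congrArg (fun z : ℤ => (z : 𝓞 (CyclotomicField 13 ℚ))) huv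
        push_cast at this
        exact this
      rw [← hcast]
      exact P.add_mem (Ideal.mul_mem_left _ _ ha) (Ideal.mul_mem_left _ _ hb)
    exact hne this
  · -- 1 - ζ ∈ P, but 1 - ζ ∣ 13, and gcd(3,13)=1
    have hdvd : (1 - ζ) ∣ (13 : 𝓞 (CyclotomicField 13 ℚ)) := by
      have hgeom : ∑ i ∈ Finset.range 13, ζ ^ i = 0 :=
        hζ.geom_sum_eq_zero (by norm_num)
      have h13eq : (13 : 𝓞 (CyclotomicField 13 ℚ)) = ∑ i ∈ Finset.range 13, (1 - ζ ^ i) := by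
        rw [Finset.sum_sub_distrib, hgeom]
        simp
      rw [h13eq]
      exact Finset.dvd_sum fun i _ => by
        simpa using sub_dvd_pow_sub_pow (1 : 𝓞 (CyclotomicField 13 ℚ)) ζ i
    have hP13 : (13 : 𝓞 (CyclotomicField 13 ℚ)) ∈ P := hdvd.elim fun t ht => ht ▸ Ideal.mul_mem_right _ _ hζP
    have : (1 : 𝓞 (CyclotomicField 13 ℚ)) ∈ P := by
      have : (1 : 𝓞 (CyclotomicField 13 ℚ)) = 13 - 4 * 3 := by norm_num
      rw [this]
      exact P.sub_mem hP13 (Ideal.mul_mem_left _ _ hP3)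
    exact hne this
end

section
/- Let a, b, c be coprime nonzero integers with a^13 + b^13 = 3c^7 and 13 | a + b. Then 7 · v₁₃(c) = v₁₃(a+b) + 1, and hence v₁₃(a + b) ≡ 6 (mod 7). -/
theorem stmt17 (a b c : ℤ) (hgcd : Int.gcd a (Int.gcd b c) = 1)
    (hne : a * b * c ≠ 0) (heq : a ^ 13 + b ^ 13 = 3 * c ^ 7)
    (h13 : (13 : ℤ) ∣ a + b) :
    7 * padicValInt 13 c = padicValInt 13 (a + b) + 1 ∧
    padicValInt 13 (a + b) % 7 = 6 := by
  have ha : a ≠ 0 := by rintro rfl; simp at hne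
  have hb : b ≠ 0 := by rintro rfl; simp at hne
  have hc : c ≠ 0 := by rintro rfl; simp at hne
  have hab : a + b ≠ 0 := by
    intro h
    have hb' : b = -a := by linarith
    rw [hb'] at heq
    have : (3 : ℤ) * c ^ 7 = 0 := by rw [← heq]; ring
    have : c ^ 7 = 0 := by linarith [this]
    exact hc (pow_eq_zero_iff (by norm_num)|>.mp this)
  have hP : Prime (13 : ℤ) := by norm_num
  have hnda : ¬ (13 : ℤ) ∣ a := by
    intro hda
    have hdb : (13 : ℤ) ∣ b := by
      have := dvd_sub h13 hda; simpa using this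
    have hdc : (13 : ℤ) ∣ c := by
      have h1 : (13 : ℤ) ∣ 3 * c ^ 7 := by
        rw [← heq]; exact dvd_add (dvd_pow hda (by norm_num)) (dvd_pow hdb (by norm_num))
      rcases hP.dvd_mul.mp h1 with h | h
      · norm_num at h
      · exact hP.dvd_of_dvd_pow h
    have : (13 : ℤ) ∣ (Int.gcd a (Int.gcd b c) : ℤ) := by
      refine Int.dvd_coe_gcd hda (Int.dvd_coe_gcd hdb hdc)
    rw [hgcd] at this
    norm_num at this
  have hfin : ∀ x : ℤ, x ≠ 0 → FiniteMultiplicity (13 : ℤ) x := by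
    intro x hx
    rw [Int.finiteMultiplicity_iff]
    exact ⟨by norm_num, hx⟩
  -- LTE
  have hlte := Int.emultiplicity_pow_add_pow (p := 13) (by norm_num) (⟨6, rfl⟩)
    (by exact_mod_cast h13) (by exact_mod_cast hnda) (n := 13) (⟨6, rfl⟩)
  have hself : emultiplicity (13 : ℕ) 13 = 1 := by
    simpa using emultiplicity_pow_self_of_prime (Nat.prime_iff.mp (by norm_num)) 1
  rw [hself, heq] at hlte
  push_cast at hlte
  have h3 : emultiplicity (13 : ℤ) 3 = 0 := by
    rw [emultiplicity_eq_zero]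
    norm_num
  rw [emultiplicity_mul hP, emultiplicity_pow hP, h3, zero_add] at hlte
  -- convert to padicValInt
  have key : ∀ x : ℤ, x ≠ 0 → emultiplicity (13 : ℤ) x = (padicValInt 13 x : ℕ∞) := by
    intro x hx
    rw [padicValInt.of_ne_one_ne_zero (by norm_num) hx,
      (hfin x hx).emultiplicity_eq_multiplicity]
    norm_num
  rw [key c hc, key (a + b) hab] at hlte
  have hmain : 7 * padicValInt 13 c = padicValInt 13 (a + b) + 1 := by
    exact_mod_cast hlte
  exact ⟨hmain, by omega⟩
end
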